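/- arXiv:1106.6061 — 8 statements merged into one kernel-verified Lean document; each statement's English description precedes it below -/
import Mathlib

section
/- If G is a unipolar graph, then G contains no hole as an induced subgraph; that is, G contains no induced chordless cycle on five or more vertices. -/
/-- A clique split of a graph `G`: the vertex set is partitioned into a center clique `H`
and peripheral cliques `P 0, …, P (k-1)` with no edges between distinct peripheral cliques. -/
structure IsCliqueSplit {V : Type*} (G : SimpleGraph V) (H : Set V) {k : ℕ}
    (P : Fin k → Set V) : Prop where
  center_clique : G.IsClique H
  periph_clique : ∀ i, G.IsClique (P i)
  center_disj : ∀ i, Disjoint H (P i)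
  periph_disj : ∀ i j, i ≠ j → Disjoint (P i) (P j)
  covers : H ∪ (⋃ i, P i) = Set.univ
  no_cross : ∀ i j, i ≠ j → ∀ u ∈ P i, ∀ v ∈ P j, ¬ G.Adj u v

/-- A graph is unipolar if it admits a clique split. -/
def Unipolar {V : Type*} (G : SimpleGraph V) : Prop :=
  ∃ (H : Set V) (k : ℕ) (P : Fin k → Set V), IsCliqueSplit G H P

/-!
Unipolarity passes to induced subgraphs, so it suffices to show that a cycle `C` of length at
least five is not unipolar. Outside the center, adjacency is transitive (the peripheral cliques
are the components), so every three consecutive vertices of `C` meet the center `H`. But `H` is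
a clique of `C`, so it lies within two consecutive vertices; if `x ∈ H`, the windows
`x + 1, x + 2, x + 3` and `x + 2, x + 3, x + 4` force `x + 1 ∈ H` and `x + 4 ∈ H`, which are
too far apart.
-/

open SimpleGraph Fin.NatCast Fin.CommRing

theorem Fin.natCast_ne_zero_of_lt {n a : ℕ} [NeZero n] (ha : 0 < a) (han : a < n) :
    (a : Fin n) ≠ 0 :=
  fun h => (Nat.le_of_dvd ha (Fin.natCast_eq_zero.mp h)).not_gt han

theorem Fin.add_natCast_ne_self {n c : ℕ} [NeZero n] (x : Fin n) (hc : 0 < c) (hcn : c < n) :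
    x + c ≠ x :=
  add_ne_left.mpr (Fin.natCast_ne_zero_of_lt hc hcn)

namespace SimpleGraph

variable {V W : Type*} {G : SimpleGraph V} {G' : SimpleGraph W}

theorem IsClique.preimage (f : G' ↪g G) {s : Set V} (hs : G.IsClique s) :
    G'.IsClique (f ⁻¹' s) :=
  fun _ hu _ hv huv => f.map_adj_iff.mp (hs hu hv (f.injective.ne huv))

theorem cycleGraph_not_adj_add_natCast {n c : ℕ} (x : Fin (n + 2)) (hc : 2 ≤ c) (hcn : c ≤ n) :
    ¬ (cycleGraph (n + 2)).Adj x (x + c) := by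
  rw [cycleGraph_adj, sub_add_cancel_left, add_sub_cancel_left, neg_eq_iff_eq_neg]
  rintro (h | h)
  · exact Fin.natCast_ne_zero_of_lt (n := n + 2) (a := c + 1) (by omega) (by omega)
      (by push_cast; linear_combination h)
  · exact Fin.natCast_ne_zero_of_lt (n := n + 2) (a := c - 1) (by omega) (by omega)
      (by push_cast [Nat.cast_sub (by omega : 1 ≤ c)]; linear_combination h)

theorem IsClique.add_natCast_notMem_of_cycleGraph {n c : ℕ} {s : Set (Fin (n + 2))}
    (hs : (cycleGraph (n + 2)).IsClique s) {x : Fin (n + 2)} (hx : x ∈ s) (hc : 2 ≤ c)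
    (hcn : c ≤ n) : x + c ∉ s := fun hxc =>
  cycleGraph_not_adj_add_natCast x hc hcn <|
    hs hx hxc (Fin.add_natCast_ne_self x (by omega) (by omega)).symm

end SimpleGraph

namespace IsCliqueSplit

variable {V W : Type*} {G : SimpleGraph V} {H : Set V} {k : ℕ} {P : Fin k → Set V}

theorem comap {G' : SimpleGraph W} (hs : IsCliqueSplit G H P) (f : G' ↪g G) :
    IsCliqueSplit G' (f ⁻¹' H) (fun i => f ⁻¹' P i) where
  center_clique := hs.center_clique.preimage f
  periph_clique i := (hs.periph_clique i).preimage f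
  center_disj i := (hs.center_disj i).preimage f
  periph_disj i j hij := (hs.periph_disj i j hij).preimage f
  covers := by rw [← Set.preimage_iUnion, ← Set.preimage_union, hs.covers, Set.preimage_univ]
  no_cross i j hij _ hu _ hv huv := hs.no_cross i j hij _ hu _ hv (f.map_adj_iff.mpr huv)

theorem exists_mem_periph (hs : IsCliqueSplit G H P) {v : V} (hv : v ∉ H) : ∃ i, v ∈ P i := by
  have : v ∈ H ∪ ⋃ i, P i := hs.covers ▸ Set.mem_univ v
  simpa [hv] using this

theorem adj_of_adj_of_notMem_center (hs : IsCliqueSplit G H P) {u v w : V}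
    (hu : u ∉ H) (hv : v ∉ H) (hw : w ∉ H) (huv : G.Adj u v) (hvw : G.Adj v w) (huw : u ≠ w) :
    G.Adj u w := by
  obtain ⟨i, hui⟩ := hs.exists_mem_periph hu
  obtain ⟨j, hvj⟩ := hs.exists_mem_periph hv
  obtain ⟨l, hwl⟩ := hs.exists_mem_periph hw
  obtain rfl : i = j := by_contra fun hij => hs.no_cross i j hij u hui v hvj huv
  obtain rfl : i = l := by_contra fun hil => hs.no_cross i l hil v hvj w hwl hvw
  exact hs.periph_clique i hui hwl huw

end IsCliqueSplit

theorem IsCliqueSplit.cycleGraph_mem_center {n k : ℕ} (hn : 2 ≤ n) {H : Set (Fin (n + 2))}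
    {P : Fin k → Set (Fin (n + 2))} (hs : IsCliqueSplit (cycleGraph (n + 2)) H P)
    (x : Fin (n + 2)) : x ∈ H ∨ x + (1 : ℕ) ∈ H ∨ x + (2 : ℕ) ∈ H := by
  by_contra! ⟨h0, h1, h2⟩
  refine cycleGraph_not_adj_add_natCast x le_rfl hn
    (hs.adj_of_adj_of_notMem_center h0 h1 h2 ?_ ?_ ?_)
  · exact cycleGraph_adj.mpr (.inr (by push_cast; ring))
  · exact cycleGraph_adj.mpr (.inr (by push_cast; ring))
  · exact (Fin.add_natCast_ne_self x (by omega) (by omega)).symm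

theorem Unipolar.comap {V W : Type*} {G : SimpleGraph V} {G' : SimpleGraph W} (hG : Unipolar G)
    (f : G' ↪g G) : Unipolar G' :=
  have ⟨_, _, _, hs⟩ := hG
  ⟨_, _, _, hs.comap f⟩

theorem not_unipolar_cycleGraph {n : ℕ} (hn : 5 ≤ n) : ¬ Unipolar (cycleGraph n) := by
  obtain ⟨m, rfl⟩ : ∃ m, n = m + 3 + 2 := ⟨n - 5, by omega⟩
  rintro ⟨H, k, P, hs⟩
  have window := hs.cycleGraph_mem_center (by omega)
  have hH := hs.center_clique
  obtain ⟨x, hx⟩ : ∃ x, x ∈ H := by rcases window 0 with h | h | h <;> exact ⟨_, h⟩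
  have hx2 := hH.add_natCast_notMem_of_cycleGraph (c := 2) hx le_rfl (by omega)
  have hx3 := hH.add_natCast_notMem_of_cycleGraph (c := 3) hx (by omega) (by omega)
  have hx1 : x + (1 : ℕ) ∈ H := by
    have := window (x + (1 : ℕ))
    simp only [add_assoc, ← Nat.cast_add, Nat.reduceAdd] at this
    tauto
  have hx4 := hH.add_natCast_notMem_of_cycleGraph (c := 3) hx1 (by omega) (by omega)
  have := window (x + (2 : ℕ))
  simp only [add_assoc, ← Nat.cast_add, Nat.reduceAdd] at this hx4
  tauto

/-- If `G` is unipolar, then `G` contains no hole (induced chordless cycle on five or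
more vertices) as an induced subgraph. -/
theorem unipolar_no_hole {V : Type*} (G : SimpleGraph V) (hG : Unipolar G)
    (n : ℕ) (hn : 5 ≤ n) :
    IsEmpty (SimpleGraph.cycleGraph n ↪g G) :=
  ⟨fun f => not_unipolar_cycleGraph hn (hG.comap f)⟩
end

section
/- Let G be a unipolar graph with clique split H, H_1, …, H_k, and let A be the vertex set of an induced antihole of G. Then A is contained in H ∪ H_i for exactly one index i; in particular, the subgraph of the complement of G induced by A is bipartite, so every antihole in a unipolar graph is even. -/
/-!
In `Gᶜ` the antihole is the cycle `Cₙ`. Two consecutive cycle vertices are non-adjacent in `G`,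
so they never share a clique, and two vertices in distinct peripheral cliques are non-adjacent
in `G`, so they are consecutive on the cycle. If consecutive `x, x + 1` lay in distinct
peripheral cliques `P i`, `P j`, then `x + 3` and `x - 2`, being `G`-adjacent to both, would be
central; this forces `x + 2 ∈ P i` and `x - 1 ∈ P j`, which are three apart and hence
`G`-adjacent when `n ≥ 5`, a contradiction. So the peripheral vertices of the antihole all lie
in one `P i`, and membership in `H` is a proper 2-colouring of `Cₙ`, so `n` is even.
-/

open SimpleGraph

namespace SimpleGraph

variable {n : ℕ}

lemma cycleGraph_adj_iff_eq_add_one [NeZero n] (hn : 2 ≤ n) {x y : Fin n} :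
    (cycleGraph n).Adj x y ↔ y = x + 1 ∨ x = y + 1 := by
  have h1 : ((1 : Fin n) : ℕ) = 1 := by rw [Fin.val_one', Nat.mod_eq_of_lt hn]
  rw [cycleGraph_adj', ← h1, ← Fin.ext_iff, ← Fin.ext_iff, sub_eq_iff_eq_add',
    sub_eq_iff_eq_add', or_comm]

lemma compl_cycleGraph_adj_add [NeZero n] {d : Fin n} (hd : 2 ≤ d.val) (hdn : d.val + 2 ≤ n)
    (x : Fin n) : (cycleGraph n)ᶜ.Adj x (x + d) := by
  have hd0 : d ≠ 0 := by rintro rfl; simp at hd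
  refine ⟨fun h => hd0 (by simpa using h.symm), ?_⟩
  rw [cycleGraph_adj', sub_add_cancel_left, add_sub_cancel_left, Fin.val_neg, if_neg hd0]
  omega

lemma even_of_colorable_cycleGraph (hn : 2 ≤ n) (h : (cycleGraph n).Colorable 2) : Even n := by
  by_contra hodd
  have := (chromaticNumber_cycleGraph_of_odd n hn (Nat.not_even_iff_odd.mp hodd)).symm.trans_le
    h.chromaticNumber_le
  norm_num at this

variable {V W : Type*} {G : SimpleGraph V} {G' : SimpleGraph W}

lemma Embedding.colorable_compl_of_colorable_compl_induce_range (f : G' ↪g G) {m : ℕ}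
    (h : (Gᶜ.induce (Set.range f)).Colorable m) : G'ᶜ.Colorable m :=
  h.of_hom ⟨fun x => ⟨f x, x, rfl⟩, fun hxy => (Embedding.complEquiv f).map_adj_iff.mpr hxy⟩

lemma Embedding.compl_adj_of_cycleGraph_adj (f : (cycleGraph n)ᶜ ↪g G) {x y : Fin n}
    (h : (cycleGraph n).Adj x y) : Gᶜ.Adj (f x) (f y) :=
  (Embedding.complEquiv f).map_adj_iff.mpr (by rwa [compl_compl])

end SimpleGraph

namespace IsCliqueSplit

variable {V : Type*} {G : SimpleGraph V} {H : Set V} {k : ℕ} {P : Fin k → Set V}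

lemma mem_center_or_exists_mem_periph (hsplit : IsCliqueSplit G H P) (v : V) :
    v ∈ H ∨ ∃ i, v ∈ P i := by
  simpa using hsplit.covers.ge (Set.mem_univ v)

lemma notMem_center_of_mem_periph (hsplit : IsCliqueSplit G H P) {v : V} {i : Fin k}
    (hv : v ∈ P i) : v ∉ H :=
  fun hH => Set.disjoint_left.mp (hsplit.center_disj i) hH hv

lemma index_eq_of_mem_periph (hsplit : IsCliqueSplit G H P) {v : V} {i j : Fin k}
    (hi : v ∈ P i) (hj : v ∈ P j) : i = j := by
  by_contra hij
  exact Set.disjoint_left.mp (hsplit.periph_disj i j hij) hi hj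

lemma index_eq_of_adj (hsplit : IsCliqueSplit G H P) {u v : V} {i j : Fin k} (hu : u ∈ P i)
    (hv : v ∈ P j) (h : G.Adj u v) : i = j := by
  by_contra hij
  exact hsplit.no_cross i j hij u hu v hv h

lemma exists_mem_periph_of_compl_adj (hsplit : IsCliqueSplit G H P) {u v : V} (hu : u ∈ H)
    (h : Gᶜ.Adj u v) : ∃ i, v ∈ P i :=
  (hsplit.mem_center_or_exists_mem_periph v).resolve_left
    fun hv => h.2 (hsplit.center_clique hu hv h.1)

lemma mem_center_of_adj_of_adj (hsplit : IsCliqueSplit G H P) {u v w : V} {i j : Fin k}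
    (hij : i ≠ j) (hu : u ∈ P i) (hv : v ∈ P j) (hwu : G.Adj w u) (hwv : G.Adj w v) :
    w ∈ H := by
  refine (hsplit.mem_center_or_exists_mem_periph w).resolve_right ?_
  rintro ⟨m, hw⟩
  exact hij ((hsplit.index_eq_of_adj hw hu hwu).symm.trans (hsplit.index_eq_of_adj hw hv hwv))

lemma colorable_compl_induce_of_subset (hsplit : IsCliqueSplit G H P) {A : Set V} {i : Fin k}
    (hA : A ⊆ H ∪ P i) : (Gᶜ.induce A).Colorable 2 := by
  classical
  refine ⟨Coloring.mk (fun v => if (v : V) ∈ H then (0 : Fin 2) else 1) ?_⟩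
  rintro ⟨u, hu⟩ ⟨v, hv⟩ ⟨hne, hnadj⟩
  rcases hA hu with huH | huP <;> rcases hA hv with hvH | hvP
  · exact absurd (hsplit.center_clique huH hvH hne) hnadj
  · simp [huH, hsplit.notMem_center_of_mem_periph hvP]
  · simp [hvH, hsplit.notMem_center_of_mem_periph huP]
  · exact absurd (hsplit.periph_clique i huP hvP hne) hnadj

section Antihole

variable {n : ℕ} [NeZero n] (f : (cycleGraph n)ᶜ ↪g G)

open Fin.CommRing in
lemma index_eq_of_antihole_add_one (hsplit : IsCliqueSplit G H P) (hn : 5 ≤ n) {x : Fin n}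
    {i j : Fin k} (hx : f x ∈ P i) (hx1 : f (x + 1) ∈ P j) : i = j := by
  have hsucc : ∀ y z : Fin n, z = y + 1 → Gᶜ.Adj (f y) (f z) := fun _ _ h =>
    f.compl_adj_of_cycleGraph_adj ((cycleGraph_adj_iff_eq_add_one (by omega)).mpr (Or.inl h))
  have hfar : ∀ (d : ℕ) (y z : Fin n), 2 ≤ d → d + 2 ≤ n → z = y + d →
      G.Adj (f y) (f z) := by
    rintro d y z hd hdn rfl
    refine f.map_adj_iff.mpr (compl_cycleGraph_adj_add ?_ ?_ y) <;>
      rw [Fin.val_cast_of_lt (by omega)] <;> omega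
  have hfar2 y z := hfar 2 y z le_rfl (by omega)
  have hfar3 y z := hfar 3 y z (by norm_num) hn
  by_contra hij
  have hx3 : f (x + 3) ∈ H := hsplit.mem_center_of_adj_of_adj hij hx hx1
    (hfar3 x _ (by ring)).symm (hfar2 (x + 1) _ (by ring)).symm
  obtain ⟨m, hx2⟩ := hsplit.exists_mem_periph_of_compl_adj hx3 (hsucc (x + 2) _ (by ring)).symm
  have hxm2 : f (x - 2) ∈ H := hsplit.mem_center_of_adj_of_adj hij hx hx1
    (hfar2 _ x (by ring)) (hfar3 _ (x + 1) (by ring))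
  obtain ⟨m', hxm1⟩ := hsplit.exists_mem_periph_of_compl_adj hxm2 (hsucc _ (x - 1) (by ring))
  have him : i = m := hsplit.index_eq_of_adj hx hx2 (hfar2 x _ (by ring))
  have hm'j : m' = j := hsplit.index_eq_of_adj hxm1 hx1 (hfar2 _ (x + 1) (by ring))
  have hm'm : m' = m := hsplit.index_eq_of_adj hxm1 hx2 (hfar3 _ (x + 2) (by ring))
  exact hij (him.trans (hm'm.symm.trans hm'j))

lemma index_eq_of_antihole (hsplit : IsCliqueSplit G H P) (hn : 5 ≤ n) {x y : Fin n}
    {i j : Fin k} (hx : f x ∈ P i) (hy : f y ∈ P j) : i = j := by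
  by_cases hxy : x = y
  · subst hxy
    exact hsplit.index_eq_of_mem_periph hx hy
  by_cases hadj : G.Adj (f x) (f y)
  · exact hsplit.index_eq_of_adj hx hy hadj
  have hcyc : (cycleGraph n).Adj x y := by
    by_contra h
    exact hadj (f.map_adj_iff.mpr ⟨hxy, h⟩)
  rcases (cycleGraph_adj_iff_eq_add_one (by omega)).mp hcyc with rfl | rfl
  · exact hsplit.index_eq_of_antihole_add_one f hn hx hy
  · exact (hsplit.index_eq_of_antihole_add_one f hn hy hx).symm

lemma exists_antihole_mem_periph (hsplit : IsCliqueSplit G H P) (hn : 2 ≤ n) :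
    ∃ x i, f x ∈ P i := by
  rcases hsplit.mem_center_or_exists_mem_periph (f 0) with h0 | ⟨i, hi⟩
  · obtain ⟨i, hi⟩ := hsplit.exists_mem_periph_of_compl_adj h0
      (f.compl_adj_of_cycleGraph_adj ((cycleGraph_adj_iff_eq_add_one hn).mpr (Or.inl rfl)))
    exact ⟨_, i, hi⟩
  · exact ⟨0, i, hi⟩

lemma existsUnique_antihole_range_subset (hsplit : IsCliqueSplit G H P) (hn : 5 ≤ n) :
    ∃! i, Set.range f ⊆ H ∪ P i := by
  obtain ⟨x₀, i₀, hx₀⟩ := hsplit.exists_antihole_mem_periph f (by omega)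
  refine ⟨i₀, ?_, fun j hj => ?_⟩
  · rintro _ ⟨x, rfl⟩
    rcases hsplit.mem_center_or_exists_mem_periph (f x) with hH | ⟨i, hi⟩
    · exact Or.inl hH
    · exact Or.inr (hsplit.index_eq_of_antihole f hn hi hx₀ ▸ hi)
  · have hj' := (hj ⟨x₀, rfl⟩).resolve_left (hsplit.notMem_center_of_mem_periph hx₀)
    exact hsplit.index_eq_of_mem_periph hj' hx₀

end Antihole

end IsCliqueSplit

/-- Let `G` be unipolar with clique split `H, P 0, …, P (k-1)`, and let `A` be the vertex
set of an induced antihole of `G` (on `n ≥ 5` vertices). Then `A ⊆ H ∪ P i` for exactly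
one index `i`; in particular, the subgraph of the complement of `G` induced by `A` is
bipartite (2-colorable), and the antihole is even. -/
theorem unipolar_antihole_in_center_union_one_periph {V : Type*} (G : SimpleGraph V)
    (H : Set V) {k : ℕ} (P : Fin k → Set V) (hsplit : IsCliqueSplit G H P)
    (n : ℕ) (hn : 5 ≤ n) (f : (SimpleGraph.cycleGraph n)ᶜ ↪g G) (A : Set V)
    (hA : A = Set.range f) :
    (∃! i : Fin k, A ⊆ H ∪ P i) ∧ ((Gᶜ.induce A).Colorable 2) ∧ Even n := by
  have : NeZero n := ⟨by omega⟩
  subst hA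
  obtain ⟨i, hsub, huniq⟩ := hsplit.existsUnique_antihole_range_subset f hn
  have hcol := hsplit.colorable_compl_induce_of_subset hsub
  refine ⟨⟨i, hsub, huniq⟩, hcol, even_of_colorable_cycleGraph (by omega) ?_⟩
  simpa using f.colorable_compl_of_colorable_compl_induce_range hcol
end

section
/- If G is a unipolar graph containing an induced chordless cycle on four vertices, then in any clique split H, H_1, …, H_k of G, the vertices of the 4-cycle can be labeled a, b, c, d (with edges a–b, b–c, c–d, d–a) so that the edge a–b has both endpoints in H_j for some j and the edge c–d has both endpoints in H. -/
/-- If `G` is unipolar and contains an induced chordless 4-cycle on vertices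
`w, x, y, z` (in cyclic order), then in any clique split `H, P 0, …, P (k-1)` of `G`
the four vertices can be relabeled `a, b, c, d` (in cyclic order, with edges `a-b`,
`b-c`, `c-d`, `d-a`) so that the edge `a-b` lies in `P j` for some `j` and the edge
`c-d` lies in `H`. -/
theorem unipolar_C4_edge_placement {V : Type*} (G : SimpleGraph V)
    (H : Set V) {k : ℕ} (P : Fin k → Set V) (hsplit : IsCliqueSplit G H P)
    (w x y z : V)
    (hwy : w ≠ y) (hxz : x ≠ z)
    (hwx : G.Adj w x) (hxy : G.Adj x y) (hyz : G.Adj y z) (hzw : G.Adj z w)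
    (hdiag1 : ¬ G.Adj w y) (hdiag2 : ¬ G.Adj x z) :
    ∃ a b c d : V, ({a, b, c, d} : Set V) = {w, x, y, z} ∧
      G.Adj a b ∧ G.Adj b c ∧ G.Adj c d ∧ G.Adj d a ∧
      (∃ j : Fin k, a ∈ P j ∧ b ∈ P j) ∧ c ∈ H ∧ d ∈ H := by
  classical
  have memHP : ∀ v : V, v ∈ H ∨ ∃ i, v ∈ P i := by
    intro v
    have := hsplit.covers
    have hv : v ∈ H ∪ (⋃ i, P i) := by rw [this]; trivial
    rcases hv with h | h
    · exact Or.inl h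
    · exact Or.inr (Set.mem_iUnion.mp h)
  have hside : ∀ u v : V, G.Adj u v → ∀ i, u ∈ P i → v ∈ H ∨ v ∈ P i := by
    intro u v huv i hu
    rcases memHP v with h | ⟨j, hj⟩
    · exact Or.inl h
    · by_cases hij : j = i
      · exact Or.inr (hij ▸ hj)
      · exact absurd huv (hsplit.no_cross i j (fun h => hij h.symm) u hu v hj)
  have notbothH : ∀ u v : V, u ≠ v → ¬ G.Adj u v → u ∈ H → v ∈ H → False := by
    intro u v hne hna hu hv
    exact hna (hsplit.center_clique hu hv hne)
  have notbothP : ∀ u v : V, u ≠ v → ¬ G.Adj u v → ∀ i, u ∈ P i → v ∈ P i → False := by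
    intro u v hne hna i hu hv
    exact hna (hsplit.periph_clique i hu hv hne)
  -- key: if w ∈ P i and y ∈ P j then contradiction
  have keyP : ∀ i, w ∈ P i → y ∈ H := by
    intro i hw
    rcases memHP y with h | ⟨j, hj⟩
    · exact h
    · exfalso
      by_cases hij : j = i
      · exact notbothP w y hwy hdiag1 i hw (hij ▸ hj)
      · -- x adjacent to both w and y forces x ∈ H; same for z; contradiction
        have hx : x ∈ H := by
          rcases hside w x hwx i hw with h | h
          · exact h
          · exact absurd hxy (hsplit.no_cross i j (fun h => hij h.symm) x h y hj)
        have hz : z ∈ H := by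
          rcases hside w z hzw.symm i hw with h | h
          · exact h
          · exact absurd hyz.symm (hsplit.no_cross i j (fun h => hij h.symm) z h y hj)
        exact notbothH x z hxz hdiag2 hx hz
  have keyP' : ∀ i, x ∈ P i → z ∈ H := by
    intro i hx
    rcases memHP z with h | ⟨j, hj⟩
    · exact h
    · exfalso
      by_cases hij : j = i
      · exact notbothP x z hxz hdiag2 i hx (hij ▸ hj)
      · have hy : y ∈ H := by
          rcases hside x y hxy i hx with h | h
          · exact h
          · exact absurd hyz (hsplit.no_cross i j (fun h => hij h.symm) y h z hj)
        have hw : w ∈ H := by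
          rcases hside x w hwx.symm i hx with h | h
          · exact h
          · exact absurd hzw (hsplit.no_cross j i hij z hj w h)
        exact notbothH w y hwy hdiag1 hw hy
  rcases memHP w with hwH | ⟨i, hwP⟩
  · -- w ∈ H, so y ∈ P i for some i
    obtain ⟨i, hyP⟩ : ∃ i, y ∈ P i := by
      rcases memHP y with h | h
      · exact absurd h (fun h => notbothH w y hwy hdiag1 hwH h)
      · exact h
    have hx := hside y x hxy.symm i hyP
    have hz := hside y z hyz i hyP
    rcases hx with hxH | hxP
    · rcases hz with hzH | hzP
      · exact absurd hzH (fun h => notbothH x z hxz hdiag2 hxH h)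
      · refine ⟨y, z, w, x, ?_, hyz, hzw, hwx, hxy, ⟨i, hyP, hzP⟩, hwH, hxH⟩
        ext v; simp only [Set.mem_insert_iff, Set.mem_singleton_iff]; tauto
    · rcases hz with hzH | hzP
      · refine ⟨y, x, w, z, ?_, hxy.symm, hwx.symm, hzw.symm, hyz.symm, ⟨i, hyP, hxP⟩, hwH, hzH⟩
        ext v; simp only [Set.mem_insert_iff, Set.mem_singleton_iff]; tauto
      · exact absurd hzP (fun h => notbothP x z hxz hdiag2 i hxP h)
  · -- w ∈ P i, so y ∈ H
    have hyH := keyP i hwP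
    have hx := hside w x hwx i hwP
    have hz := hside w z hzw.symm i hwP
    rcases hx with hxH | hxP
    · rcases hz with hzH | hzP
      · exact absurd hzH (fun h => notbothH x z hxz hdiag2 hxH h)
      · refine ⟨w, z, y, x, ?_, hzw.symm, hyz.symm, hxy.symm, hwx.symm, ⟨i, hwP, hzP⟩, hyH, hxH⟩
        ext v; simp only [Set.mem_insert_iff, Set.mem_singleton_iff]; tauto
    · rcases hz with hzH | hzP
      · refine ⟨w, x, y, z, ?_, hwx, hxy, hyz, hzw, ⟨i, hwP, hxP⟩, hyH, hzH⟩
        rfl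
      · exact absurd hzP (fun h => notbothP x z hxz hdiag2 i hxP h)
end

section
/- Let G = (V,E) be a unipolar graph and let G' = (V, E ∪ F) be a minimal triangulation of G. Then in any clique split H, H_1, …, H_k of G, every edge of F has one endpoint in H and the other endpoint in H_j for some j. -/
/-- A graph is chordal if it contains no induced cycle on four or more vertices. -/
def Chordal {V : Type*} (G : SimpleGraph V) : Prop :=
  ∀ n : ℕ, 4 ≤ n → IsEmpty (SimpleGraph.cycleGraph n ↪g G)

/-- `Gp` is a minimal triangulation of `G`: it is a chordal supergraph of `G` on the same
vertex set, and no chordal graph strictly between `G` and `Gp` exists (the set of fill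
edges is inclusion-minimal). -/
def IsMinimalTriangulation {V : Type*} (G Gp : SimpleGraph V) : Prop :=
  G ≤ Gp ∧ Chordal Gp ∧ ∀ Gpp : SimpleGraph V, G ≤ Gpp → Gpp ≤ Gp → Chordal Gpp → Gpp = Gp

/-!
Deleting from `Gp` every edge between two distinct peripheral cliques leaves a graph between
`G` and `Gp`, and it is still chordal. Indeed, on an induced cycle of it, a path from one
peripheral clique to another must pass through the center; if the cycle met two distinct
peripheral cliques, each of the two arcs joining them would contain a center vertex, and these
two center vertices are adjacent but not consecutive on the cycle. So the cycle meets only one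
peripheral clique, hence is also an induced cycle of `Gp`. By minimality nothing was deleted,
and an edge of `Gp` inside `H` or inside one `P j` is already an edge of `G`.
-/

open Fin.NatCast Fin.CommRing

theorem Fin.eq_of_add_natCast_eq {n : ℕ} [NeZero n] (i : Fin n) {x y : ℕ} (hx : x < n)
    (hy : y < n) (h : i + (x : Fin n) = i + y) : x = y := by
  have := congrArg Fin.val (add_left_cancel h)
  rwa [Fin.val_cast_of_lt hx, Fin.val_cast_of_lt hy] at this

namespace SimpleGraph

theorem cycleGraph_adj_add_natCast_succ {n : ℕ} [NeZero n] (hn : 1 < n) (i : Fin n) (t : ℕ) :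
    (cycleGraph n).Adj (i + (t : Fin n)) (i + (t + 1 : ℕ)) := by
  rw [cycleGraph_adj']
  right
  rw [Nat.cast_succ, add_sub_add_left_eq_sub, add_sub_cancel_left, ← Nat.cast_one,
    Fin.val_cast_of_lt hn]

theorem cycleGraph_adj_add_natCast_iff {n : ℕ} [NeZero n] (i : Fin n) {x y : ℕ} (hxy : x < y)
    (hy : y < n) : (cycleGraph n).Adj (i + x) (i + y) ↔ y = x + 1 ∨ y + 1 = x + n := by
  have hsub₁ : i + (y : Fin n) - (i + x) = ((y - x : ℕ) : Fin n) := by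
    rw [add_sub_add_left_eq_sub, Nat.cast_sub hxy.le]
  have hsub₂ : i + (x : Fin n) - (i + y) = ((x + n - y : ℕ) : Fin n) := by
    rw [add_sub_add_left_eq_sub, Nat.cast_sub (by omega), Nat.cast_add, Fin.natCast_self,
      add_zero]
  rw [cycleGraph_adj', hsub₁, hsub₂, Fin.val_cast_of_lt (by omega), Fin.val_cast_of_lt (by omega)]
  omega

variable {V ι : Type*}

def deleteCrossEdges (L : SimpleGraph V) (P : ι → Set V) : SimpleGraph V where
  Adj u v := L.Adj u v ∧ ∀ a b, u ∈ P a → v ∈ P b → a = b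
  symm := ⟨fun _ _ h => ⟨h.1.symm, fun a b ha hb => (h.2 b a hb ha).symm⟩⟩
  loopless := ⟨fun v h => L.loopless.irrefl v h.1⟩

theorem deleteCrossEdges_le (L : SimpleGraph V) (P : ι → Set V) : L.deleteCrossEdges P ≤ L :=
  fun _ _ h => h.1

end SimpleGraph

namespace IsCliqueSplit

open SimpleGraph

variable {V : Type*} {G : SimpleGraph V} {H : Set V} {k : ℕ} {P : Fin k → Set V}

theorem mem_or_exists_mem (hs : IsCliqueSplit G H P) (v : V) : v ∈ H ∨ ∃ i, v ∈ P i := by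
  have hv : v ∈ H ∪ ⋃ i, P i := hs.covers ▸ Set.mem_univ v
  simpa using hv

theorem le_deleteCrossEdges (hs : IsCliqueSplit G H P) {L : SimpleGraph V} (hGL : G ≤ L) :
    G ≤ L.deleteCrossEdges P :=
  fun u v h => ⟨hGL h, fun a b hu hv => by_contra fun hab => hs.no_cross a b hab u hu v hv h⟩

protected theorem deleteCrossEdges (hs : IsCliqueSplit G H P) {L : SimpleGraph V}
    (hGL : G ≤ L) : IsCliqueSplit (L.deleteCrossEdges P) H P where
  center_clique := hs.center_clique.mono (hs.le_deleteCrossEdges hGL)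
  periph_clique i := (hs.periph_clique i).mono (hs.le_deleteCrossEdges hGL)
  center_disj := hs.center_disj
  periph_disj := hs.periph_disj
  covers := hs.covers
  no_cross _ _ hab _ hu _ hv h := hab (h.2 _ _ hu hv)

theorem exists_mem_center_of_adj_succ (hs : IsCliqueSplit G H P) {g : ℕ → V}
    (hg : ∀ t, G.Adj (g t) (g (t + 1))) {a b : Fin k} (hab : a ≠ b) {m d : ℕ}
    (ha : g m ∈ P a) (hb : g (m + d) ∈ P b) : ∃ t, m < t ∧ t < m + d ∧ g t ∈ H := by
  induction d generalizing m with
  | zero => exact absurd hb (Set.disjoint_left.mp (hs.periph_disj a b hab) ha)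
  | succ d ih =>
    rcases hs.mem_or_exists_mem (g (m + 1)) with hH | ⟨c, hc⟩
    · rcases Nat.eq_zero_or_pos d with rfl | hd
      · exact absurd hb (Set.disjoint_left.mp (hs.center_disj b) hH)
      · exact ⟨m + 1, by omega, by omega, hH⟩
    · obtain rfl : a = c := by_contra fun hac => hs.no_cross a c hac _ ha _ hc (hg m)
      obtain ⟨t, hmt, htd, ht⟩ := ih hc (by rwa [Nat.add_right_comm])
      exact ⟨t, by omega, by omega, ht⟩

theorem periph_eq_of_cycleGraph_embedding (hs : IsCliqueSplit G H P) {n : ℕ} (hn : 1 < n)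
    (f : cycleGraph n ↪g G) {i j : Fin n} {a b : Fin k} (ha : f i ∈ P a) (hb : f j ∈ P b) :
    a = b := by
  by_contra hab
  have : NeZero n := ⟨by omega⟩
  let g : ℕ → V := fun t => f (i + t)
  have hg : ∀ t, G.Adj (g t) (g (t + 1)) := fun t =>
    f.map_adj_iff.mpr (cycleGraph_adj_add_natCast_succ hn i t)
  have hd : (j - i).val < n := (j - i).isLt
  have hg0 : g 0 = f i := by simp [g]
  have hgd : g (j - i).val = f j := by simp [g]
  have hgn : g n = f i := by simp [g]
  obtain ⟨t₁, ht₁, ht₁d, hH₁⟩ := hs.exists_mem_center_of_adj_succ hg hab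
    (m := 0) (hg0 ▸ ha) (by rwa [zero_add, hgd])
  obtain ⟨t₂, hdt₂, ht₂, hH₂⟩ := hs.exists_mem_center_of_adj_succ hg (Ne.symm hab)
    (d := n - (j - i).val) (hgd ▸ hb) (by rwa [Nat.add_sub_cancel' hd.le, hgn])
  have hne : g t₁ ≠ g t₂ := fun h => by
    have := Fin.eq_of_add_natCast_eq i (by omega) (by omega) (f.injective h)
    omega
  have hadj := hs.center_clique hH₁ hH₂ hne
  rw [f.map_adj_iff, cycleGraph_adj_add_natCast_iff i (by omega) (by omega)] at hadj
  omega

end IsCliqueSplit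

theorem Chordal.deleteCrossEdges {V : Type*} {L : SimpleGraph V} {H : Set V} {k : ℕ}
    {P : Fin k → Set V} (hL : Chordal L) (hs : IsCliqueSplit (L.deleteCrossEdges P) H P) :
    Chordal (L.deleteCrossEdges P) := by
  intro n hn
  refine ⟨fun f => (hL n hn).false ⟨f.toEmbedding, fun {i j} => ?_⟩⟩
  rw [← f.map_rel_iff]
  exact ⟨fun h => ⟨h, fun a b ha hb => hs.periph_eq_of_cycleGraph_embedding (by omega) f ha hb⟩,
    And.left⟩

/-- Let `G` be unipolar and `Gp` a minimal triangulation of `G`. Then in any clique split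
`H, P 0, …, P (k-1)` of `G`, every fill edge (edge of `Gp` not in `G`) has one endpoint
in `H` and the other endpoint in `P j` for some `j`. -/
theorem minimalTriangulation_fill_edges {V : Type*} (G Gp : SimpleGraph V)
    (hmt : IsMinimalTriangulation G Gp)
    (H : Set V) {k : ℕ} (P : Fin k → Set V) (hsplit : IsCliqueSplit G H P) :
    ∀ u v : V, Gp.Adj u v → ¬ G.Adj u v →
      (u ∈ H ∧ ∃ j : Fin k, v ∈ P j) ∨ (v ∈ H ∧ ∃ j : Fin k, u ∈ P j) := by
  obtain ⟨hGGp, hchordal, hmin⟩ := hmt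
  have heq : Gp.deleteCrossEdges P = Gp :=
    hmin _ (hsplit.le_deleteCrossEdges hGGp) (Gp.deleteCrossEdges_le P)
      (hchordal.deleteCrossEdges (hsplit.deleteCrossEdges hGGp))
  intro u v huv hnuv
  rw [← heq] at huv
  rcases hsplit.mem_or_exists_mem u with hu | ⟨a, hu⟩ <;>
    rcases hsplit.mem_or_exists_mem v with hv | ⟨b, hv⟩
  · exact absurd (hsplit.center_clique hu hv huv.1.ne) hnuv
  · exact Or.inl ⟨hu, b, hv⟩
  · exact Or.inr ⟨hv, a, hu⟩
  · obtain rfl := huv.2 a b hu hv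
    exact absurd (hsplit.periph_clique a hu hv huv.1.ne) hnuv
end

section
/- Let G be a unipolar graph with clique split H, H_1, …, H_k. Then G has a partition of its vertex set into α(G) cliques (a minimum clique cover of size α(G)). Specifically, if some vertex x ∈ H has a non-neighbor in every H_i then α(G) = k + 1 and the clique split itself is a minimum clique cover; otherwise α(G) = k and for every vertex v ∈ H there is an index i such that {v} ∪ H_i is a clique, so a clique cover of size k is obtained by adding each vertex of H to an appropriate peripheral clique. -/
/-- A set of vertices is independent if its vertices are pairwise nonadjacent. -/
def IsIndepSet {V : Type*} (G : SimpleGraph V) (s : Set V) : Prop :=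
  s.Pairwise fun u v => ¬ G.Adj u v

/-- An independent set has at most as many vertices as any clique cover has parts. -/
lemma indep_ncard_le_cover {V : Type*} (G : SimpleGraph V) (s : Set V)
    (hs : IsIndepSet G s) (m : ℕ) (Q : Fin m → Set V) (hQ : ∀ i, G.IsClique (Q i))
    (hcov : s ⊆ ⋃ i, Q i) : s.ncard ≤ m := by
  have key : ∀ v : s, ∃ i : Fin m, (v : V) ∈ Q i := fun v => Set.mem_iUnion.mp (hcov v.2)
  choose f hf using key
  have hinj : Function.Injective f := by
    intro u v h
    by_contra hne'
    have huv : (u : V) ≠ v := fun e => hne' (Subtype.ext e)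
    exact hs u.2 v.2 huv (hQ (f u) (hf u) (h ▸ hf v) huv)
  calc s.ncard = Nat.card s := (Nat.card_coe_set_eq s).symm
    _ ≤ Nat.card (Fin m) := Nat.card_le_card_of_injective f hinj
    _ = m := by simp

lemma range_indep_ncard {V : Type*} (G : SimpleGraph V) {k : ℕ} {y : Fin k → V}
    (hy : Function.Injective y) : (Set.range y).ncard = k := by
  rw [← Nat.card_coe_set_eq, Nat.card_range_of_injective hy]
  simp

/-- Let `G` be unipolar with clique split `H, P 0, …, P (k-1)` (peripheral cliques
nonempty). Then `G` has a minimum clique cover of size `α(G)`. Specifically: if some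
vertex `x ∈ H` has a non-neighbor in every `P i`, then `α(G) = k + 1` and the clique
split itself is a minimum clique cover (every clique cover has at least `k + 1` parts);
otherwise `α(G) = k`, every vertex `v ∈ H` can be added to some peripheral clique
`P i` so that `{v} ∪ P i` is a clique, and a minimum clique cover of size `k` is
obtained by adding each vertex of `H` to an appropriate peripheral clique. -/
theorem unipolar_clique_cover {V : Type*} (G : SimpleGraph V)
    (H : Set V) {k : ℕ} (P : Fin k → Set V) (hsplit : IsCliqueSplit G H P)
    (hne : ∀ i, (P i).Nonempty) :
    ((∃ x ∈ H, ∀ i : Fin k, ∃ y ∈ P i, ¬ G.Adj x y) →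
      (∀ s : Set V, IsIndepSet G s → s.ncard ≤ k + 1) ∧
      (∃ s : Set V, IsIndepSet G s ∧ s.ncard = k + 1) ∧
      (∀ (m : ℕ) (Q : Fin m → Set V), (∀ i, G.IsClique (Q i)) →
        (⋃ i, Q i) = Set.univ → k + 1 ≤ m)) ∧
    ((¬ ∃ x ∈ H, ∀ i : Fin k, ∃ y ∈ P i, ¬ G.Adj x y) →
      (∀ s : Set V, IsIndepSet G s → s.ncard ≤ k) ∧
      (∃ s : Set V, IsIndepSet G s ∧ s.ncard = k) ∧
      (∀ v ∈ H, ∃ i : Fin k, G.IsClique (insert v (P i))) ∧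
      (∃ Q : Fin k → Set V, (∀ i, G.IsClique (Q i)) ∧ (∀ i, P i ⊆ Q i) ∧
        (∀ i j, i ≠ j → Disjoint (Q i) (Q j)) ∧ (⋃ i, Q i) = Set.univ) ∧
      (∀ (m : ℕ) (Q : Fin m → Set V), (∀ i, G.IsClique (Q i)) →
        (⋃ i, Q i) = Set.univ → k ≤ m)) := by
  constructor
  · rintro ⟨x, hxH, hx⟩
    choose y hy hxy using hx
    have hyinj : Function.Injective y := by
      intro i j h
      by_contra hij
      exact Set.disjoint_left.mp (hsplit.periph_disj i j hij) (hy i) (h ▸ hy j)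
    have hxny : x ∉ Set.range y := by
      rintro ⟨i, rfl⟩
      exact Set.disjoint_left.mp (hsplit.center_disj i) hxH (hy i)
    -- the independent set of size k+1
    have hindep : IsIndepSet G (insert x (Set.range y)) := by
      rintro u (rfl | ⟨i, rfl⟩) v (rfl | ⟨j, rfl⟩) huv
      · exact absurd rfl huv
      · exact hxy j
      · exact fun h => hxy i h.symm
      · have hij : i ≠ j := fun e => huv (e ▸ rfl)
        exact hsplit.no_cross i j hij _ (hy i) _ (hy j)
    have hcard : (insert x (Set.range y)).ncard = k + 1 := by
      rw [Set.ncard_insert_of_notMem hxny (Set.finite_range y),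
        range_indep_ncard G hyinj]
    refine ⟨?_, ⟨_, hindep, hcard⟩, ?_⟩
    · intro s hs
      refine indep_ncard_le_cover G s hs (k + 1) (Fin.cons H P) ?_ ?_
      · intro i
        refine Fin.cases ?_ ?_ i
        · exact hsplit.center_clique
        · exact fun j => hsplit.periph_clique j
      · intro v _
        have hv : v ∈ H ∪ ⋃ i, P i := hsplit.covers ▸ Set.mem_univ v
        rcases hv with hv | hv
        · exact Set.mem_iUnion.mpr ⟨0, hv⟩
        · obtain ⟨i, hi⟩ := Set.mem_iUnion.mp hv
          exact Set.mem_iUnion.mpr ⟨i.succ, hi⟩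
    · intro m Q hQ hcov
      calc k + 1 = (insert x (Set.range y)).ncard := hcard.symm
        _ ≤ m := indep_ncard_le_cover G _ hindep m Q hQ (by rw [hcov]; exact Set.subset_univ _)
  · intro hx
    push_neg at hx
    -- hx : ∀ x ∈ H, ∃ i, ∀ y ∈ P i, G.Adj x y
    choose g hg using hx
    -- the clique cover of size k
    set Q : Fin k → Set V := fun i => P i ∪ {v | ∃ h : v ∈ H, g v h = i} with hQdef
    have hQclique : ∀ i, G.IsClique (Q i) := by
      rintro i u (hu | ⟨huH, hgu⟩) v (hv | ⟨hvH, hgv⟩) huv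
      · exact hsplit.periph_clique i hu hv huv
      · exact (hg v hvH u (by rw [hgv]; exact hu)).symm
      · exact hg u huH v (by rw [hgu]; exact hv)
      · exact hsplit.center_clique huH hvH huv
    have hQsub : ∀ i, P i ⊆ Q i := fun i => Set.subset_union_left
    have hQdisj : ∀ i j, i ≠ j → Disjoint (Q i) (Q j) := by
      intro i j hij
      rw [Set.disjoint_left]
      rintro v (hv | ⟨hvH, hvi⟩) (hw | ⟨hwH, hwj⟩)
      · exact Set.disjoint_left.mp (hsplit.periph_disj i j hij) hv hw
      · exact Set.disjoint_left.mp (hsplit.center_disj i) hwH hv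
      · exact Set.disjoint_left.mp (hsplit.center_disj j) hvH hw
      · exact hij (hvi.symm.trans hwj)
    have hQcov : (⋃ i, Q i) = Set.univ := by
      ext v
      simp only [Set.mem_iUnion, Set.mem_univ, iff_true]
      by_cases hv : v ∈ H
      · exact ⟨g v hv, Or.inr ⟨hv, rfl⟩⟩
      · have hv' : v ∈ H ∪ ⋃ i, P i := hsplit.covers ▸ Set.mem_univ v
        rcases hv' with hv' | hv'
        · exact absurd hv' hv
        · obtain ⟨i, hi⟩ := Set.mem_iUnion.mp hv'
          exact ⟨i, Or.inl hi⟩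
    -- the independent set of size k
    choose y hy using hne
    have hyinj : Function.Injective y := by
      intro i j h
      by_contra hij
      exact Set.disjoint_left.mp (hsplit.periph_disj i j hij) (hy i) (h ▸ hy j)
    have hindep : IsIndepSet G (Set.range y) := by
      rintro u ⟨i, rfl⟩ v ⟨j, rfl⟩ huv
      have hij : i ≠ j := fun e => huv (e ▸ rfl)
      exact hsplit.no_cross i j hij _ (hy i) _ (hy j)
    have hcard : (Set.range y).ncard = k := range_indep_ncard G hyinj
    refine ⟨?_, ⟨_, hindep, hcard⟩, ?_, ⟨Q, hQclique, hQsub, hQdisj, hQcov⟩, ?_⟩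
    · intro s hs
      exact indep_ncard_le_cover G s hs k Q hQclique (by rw [hQcov]; exact Set.subset_univ _)
    · intro v hv
      refine ⟨g v hv, (hsplit.periph_clique _).insert fun b hb hvb => hg v hv b hb⟩
    · intro m Q' hQ' hcov'
      calc k = (Set.range y).ncard := hcard.symm
        _ ≤ m := indep_ncard_le_cover G _ hindep m Q' hQ' (by rw [hcov']; exact Set.subset_univ _)
end

section
/- Every unipolar graph G has a proper vertex coloring using exactly ω(G) colors; that is, the chromatic number of a unipolar graph equals its clique number. -/
/-- The clique number of `G`, as the supremum of the sizes of cliques. -/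
noncomputable def cliqueNum' {V : Type*} (G : SimpleGraph V) : ℕ :=
  sSup {n | ∃ s : Set V, G.IsClique s ∧ s.ncard = n}

open Finset Function

namespace SimpleGraph

variable {V α : Type*} {G : SimpleGraph V} {n : ℕ}

theorem IsClique.card_le_of_cliqueFree {s : Finset V} (hs : G.IsClique s)
    (hG : G.CliqueFree (n + 1)) : #s ≤ n := by
  by_contra! h
  obtain ⟨t, hts, ht⟩ := exists_subset_card_eq h
  exact hG t ⟨hs.subset (by simpa using hts), ht⟩

theorem IsClique.finite_of_cliqueFree {s : Set V} (hs : G.IsClique s) (hG : G.CliqueFree n) :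
    s.Finite := by
  by_contra h
  obtain ⟨t, hts, ht⟩ := Set.Infinite.exists_subset_card_eq h n
  exact hG t ⟨hs.subset hts, ht⟩

theorem IsClique.exists_injective_of_cliqueFree [Fintype α] {s : Set V} (hs : G.IsClique s)
    (hG : G.CliqueFree (Fintype.card α + 1)) : ∃ f : s → α, Injective f := by
  have := (hs.finite_of_cliqueFree hG).fintype
  have hcard : #s.toFinset ≤ Fintype.card α :=
    IsClique.card_le_of_cliqueFree (by simpa using hs) hG
  rw [Set.toFinset_card] at hcard
  obtain ⟨f⟩ := Function.Embedding.nonempty_of_card_le hcard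
  exact ⟨f, f.injective⟩

theorem exists_injective_avoiding_of_cliqueFree [Fintype α] {H P : Set V} (hH : G.IsClique H)
    (hP : G.IsClique P) (hHP : Disjoint H P) (hG : G.CliqueFree (Fintype.card α + 1))
    {φ : H → α} (hφ : Injective φ) :
    ∃ g : P → α, Injective g ∧ ∀ (v : P) (h : H), G.Adj v h → φ h ≠ g v := by
  classical
  have := Finite.of_injective φ hφ
  have := Fintype.ofFinite H
  let free (v : P) (a : α) : Prop := ∀ h : H, G.Adj v h → φ h ≠ a
  refine (Fintype.all_card_le_filter_rel_iff_exists_injective free).1 fun A => ?_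
  rcases A.eq_empty_or_nonempty with rfl | ⟨v₀, hv₀⟩
  · simp
  let N : Finset H := {h | ∀ v ∈ A, G.Adj v h}
  have hclique : #A + #N ≤ Fintype.card α := by
    have hdisj : Disjoint (A.map (Embedding.subtype _)) (N.map (Embedding.subtype _)) := by
      refine Finset.disjoint_left.2 ?_
      simp only [mem_map]
      rintro _ ⟨v, -, rfl⟩ ⟨h, -, hv⟩
      exact hHP.ne_of_mem h.2 v.2 hv
    rw [← card_map (Embedding.subtype _), ← card_map (Embedding.subtype _) (s := N),
      ← card_union_of_disjoint hdisj]
    refine IsClique.card_le_of_cliqueFree ?_ hG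
    have := G.symm
    rw [coe_union, IsClique, Set.pairwise_union_of_symm]
    refine ⟨hP.subset ?_, hH.subset ?_, ?_⟩
    · simp
    · simp
    · simp only [coe_map, Embedding.coe_subtype, Set.mem_image, mem_coe]
      rintro _ ⟨v, hv, rfl⟩ _ ⟨h, hh, rfl⟩ -
      exact (mem_filter.1 hh).2 v hv
  have hmissing : #{a | ¬ ∃ v ∈ A, free v a} ≤ #N := by
    refine (card_le_card fun a ha => ?_).trans (card_image_le (f := φ))
    simp only [mem_filter, mem_univ, true_and, not_exists, not_and, free, not_forall, not_not,
      exists_prop] at ha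
    obtain ⟨h₀, -, rfl⟩ := ha v₀ hv₀
    refine mem_image_of_mem φ (mem_filter.2 ⟨mem_univ _, fun v hv => ?_⟩)
    obtain ⟨h, hvh, hh⟩ := ha v hv
    rwa [← hφ hh]
  have := card_filter_add_card_filter_not (s := (univ : Finset α)) (fun a => ∃ v ∈ A, free v a)
  rw [card_univ] at this
  omega

theorem cliqueFree_cliqueNum_succ [Finite V] (G : SimpleGraph V) :
    G.CliqueFree (G.cliqueNum + 1) := fun t ht => by
  have := IsClique.card_le_cliqueNum (tc := ht.isClique)
  rw [ht.card_eq] at this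
  omega

end SimpleGraph

open SimpleGraph

section

variable {V : Type*} {G : SimpleGraph V}

-- An infinite clique has `ncard` zero, the size of the empty clique.
theorem cliqueNum'_eq_cliqueNum (G : SimpleGraph V) : cliqueNum' G = G.cliqueNum := by
  refine congrArg sSup (Set.ext fun n => ⟨?_, ?_⟩)
  · rintro ⟨s, hs, rfl⟩
    obtain hfin | hinf := s.finite_or_infinite
    · exact ⟨hfin.toFinset, by simpa using hs, (Set.ncard_eq_toFinset_card s hfin).symm⟩
    · exact ⟨∅, by simp [hinf.ncard]⟩
  · rintro ⟨s, hs⟩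
    exact ⟨s, hs.isClique, by simp [hs.card_eq]⟩

theorem IsCliqueSplit.exists_mem_periph_s14 {H : Set V} {k : ℕ} {P : Fin k → Set V}
    (hs : IsCliqueSplit G H P) {v : V} (hv : v ∉ H) : ∃ i, v ∈ P i := by
  have : v ∈ H ∪ ⋃ i, P i := hs.covers ▸ Set.mem_univ v
  simpa [hv] using this

theorem IsCliqueSplit.colorable_of_cliqueFree {H : Set V} {k n : ℕ} {P : Fin k → Set V}
    (hs : IsCliqueSplit G H P) (hG : G.CliqueFree (n + 1)) : G.Colorable n := by
  classical
  rw [← Fintype.card_fin n] at hG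
  obtain ⟨φ, hφ⟩ := hs.center_clique.exists_injective_of_cliqueFree hG
  choose g hg hgφ using fun i => exists_injective_avoiding_of_cliqueFree hs.center_clique
    (hs.periph_clique i) (hs.center_disj i) hG hφ
  choose idx hidx using fun v (hv : v ∉ H) => hs.exists_mem_periph_s14 hv
  let c (v : V) : Fin n := if hv : v ∈ H then φ ⟨v, hv⟩ else g (idx v hv) ⟨v, hidx v hv⟩
  have hperiph (a b : V) (hab : G.Adj a b) (hb : b ∉ H) : c a ≠ c b := by
    by_cases ha : a ∈ H
    · simpa [c, ha, hb] using hgφ _ ⟨b, hidx b hb⟩ ⟨a, ha⟩ hab.symm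
    · have key (i j : Fin k) (hai : a ∈ P i) (hbj : b ∈ P j) :
          g i ⟨a, hai⟩ ≠ g j ⟨b, hbj⟩ := by
        rcases eq_or_ne i j with rfl | hij
        · exact (hg i).ne (Subtype.coe_ne_coe.1 hab.ne)
        · exact absurd hab (hs.no_cross i j hij a hai b hbj)
      simpa [c, ha, hb] using key _ _ (hidx a ha) (hidx b hb)
  refine ⟨Coloring.mk c fun {a b} hab => ?_⟩
  by_cases hb : b ∈ H
  · by_cases ha : a ∈ H
    · simpa [c, ha, hb] using hφ.ne (Subtype.coe_ne_coe.1 hab.ne)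
    · exact (hperiph b a hab.symm ha).symm
  · exact hperiph a b hab hb

end

/-- Every unipolar graph `G` has a proper vertex coloring using exactly `ω(G)` colors;
that is, the chromatic number of a unipolar graph equals its clique number. -/
theorem unipolar_chromatic_eq_clique {V : Type*} [Fintype V] (G : SimpleGraph V)
    (hG : Unipolar G) :
    G.Colorable (cliqueNum' G) ∧ G.chromaticNumber = (cliqueNum' G : ℕ∞) := by
  obtain ⟨H, k, P, hs⟩ := hG
  have hcol : G.Colorable G.cliqueNum := hs.colorable_of_cliqueFree G.cliqueFree_cliqueNum_succ
  rw [cliqueNum'_eq_cliqueNum]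
  exact ⟨hcol, le_antisymm hcol.chromaticNumber_le G.cliqueNum_le_chromaticNumber⟩
end

section
/- Let X = {x_1, …, x_k} be a set of variables and Q = {q_1, …, q_s} a set of clauses, each clause being a set of exactly three variables from X (no negations). Construct the graph G as follows: G has a vertex q_i for each clause, and the set Q of clause vertices forms a clique; for each variable x_i, G has a pair of adjacent vertices x_i and a_i, where a_i is adjacent only to x_i; each clause vertex q_j is adjacent to exactly the variable vertices x_i with x_i ∈ q_j. Then G is unipolar with clique split Q, {x_1,a_1}, …, {x_k,a_k}, and G has a perfect code if and only if there exists a truth assignment to X setting exactly one variable in each clause of Q to TRUE. -/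
/-- A perfect code in `G` is an independent set `D` such that every vertex is either in
`D` or has exactly one neighbor in `D`. -/
def IsPerfectCode {V : Type*} (G : SimpleGraph V) (D : Set V) : Prop :=
  D.Pairwise (fun u v => ¬ G.Adj u v) ∧
  ∀ v : V, v ∈ D ∨ ∃! u : V, u ∈ D ∧ G.Adj v u


/-- The graph built from a One-in-Three 3SAT instance with clauses `Q` over variables
`Fin k`: clause vertices `Sum.inl j` form a clique, each variable has a pair of adjacent
vertices `Sum.inr (Sum.inl i)` (the variable vertex) and `Sum.inr (Sum.inr i)` (the
pendant vertex `a i`, adjacent only to the variable vertex), and each clause vertex is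
adjacent exactly to the variable vertices of its clause. -/
def satGraph (k s : ℕ) (Q : Fin s → Finset (Fin k)) :
    SimpleGraph (Fin s ⊕ (Fin k ⊕ Fin k)) :=
  SimpleGraph.fromRel fun u v =>
    match u, v with
    | Sum.inl _, Sum.inl _ => True
    | Sum.inl j, Sum.inr (Sum.inl i) => i ∈ Q j
    | Sum.inr (Sum.inl i), Sum.inr (Sum.inr i2) => i = i2
    | _, _ => False

/-!
A clause vertex cannot lie in a perfect code `D`: each of its variable vertices `x` carries a
pendant vertex `a`, and `D` must contain `x` or `a`; neither is possible next to a clause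
vertex of `D`. So every clause vertex has exactly one neighbour in `D`, which is a variable
vertex of that clause, and the variables whose vertex lies in `D` form a one-in-three
assignment. Conversely an assignment `T` gives the perfect code consisting of `x i` for
`i ∈ T` and `a i` for `i ∉ T`.
-/

namespace IsPerfectCode

variable {V : Type*} {G : SimpleGraph V} {D : Set V}

theorem not_adj (hD : IsPerfectCode G D) {u v : V} (hu : u ∈ D) (hv : v ∈ D) : ¬ G.Adj u v :=
  fun h => hD.1 hu hv h.ne h

theorem exists_adj_of_notMem (hD : IsPerfectCode G D) {v : V} (hv : v ∉ D) :
    ∃ u ∈ D, G.Adj v u :=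
  ((hD.2 v).resolve_left hv).exists

theorem eq_of_adj_of_notMem (hD : IsPerfectCode G D) {v u w : V} (hv : v ∉ D)
    (hu : u ∈ D) (hw : w ∈ D) (hvu : G.Adj v u) (hvw : G.Adj v w) : u = w :=
  ((hD.2 v).resolve_left hv).unique ⟨hu, hvu⟩ ⟨hw, hvw⟩

theorem mem_or_mem_of_pendant (hD : IsPerfectCode G D) {a x : V}
    (ha : ∀ w, G.Adj a w ↔ w = x) : a ∈ D ∨ x ∈ D := by
  refine or_iff_not_imp_left.2 fun haD => ?_
  obtain ⟨u, huD, hau⟩ := hD.exists_adj_of_notMem haD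
  exact (ha u).1 hau ▸ huD

theorem eq_pendant_of_adj (hD : IsPerfectCode G D) {a x q : V}
    (ha : ∀ w, G.Adj a w ↔ w = x) (hq : q ∈ D) (hxq : G.Adj x q) : q = a := by
  have hxD : x ∉ D := fun hx => hD.not_adj hx hq hxq
  have haD : a ∈ D := (hD.mem_or_mem_of_pendant ha).resolve_right hxD
  exact hD.eq_of_adj_of_notMem hxD hq haD hxq ((ha x).2 rfl).symm

end IsPerfectCode

namespace satGraph

variable {k s : ℕ} {Q : Fin s → Finset (Fin k)}

@[simp]
theorem adj_clause_clause {j j' : Fin s} :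
    (satGraph k s Q).Adj (Sum.inl j) (Sum.inl j') ↔ j ≠ j' := by
  simp [satGraph]

@[simp]
theorem adj_clause_var {j : Fin s} {i : Fin k} :
    (satGraph k s Q).Adj (Sum.inl j) (Sum.inr (Sum.inl i)) ↔ i ∈ Q j := by
  simp [satGraph]

@[simp]
theorem adj_var_clause {j : Fin s} {i : Fin k} :
    (satGraph k s Q).Adj (Sum.inr (Sum.inl i)) (Sum.inl j) ↔ i ∈ Q j := by
  simp [satGraph]

@[simp]
theorem not_adj_clause_pendant {j : Fin s} {i : Fin k} :
    ¬ (satGraph k s Q).Adj (Sum.inl j) (Sum.inr (Sum.inr i)) := by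
  simp [satGraph]

@[simp]
theorem not_adj_var_var {i i' : Fin k} :
    ¬ (satGraph k s Q).Adj (Sum.inr (Sum.inl i)) (Sum.inr (Sum.inl i')) := by
  simp [satGraph]

@[simp]
theorem adj_var_pendant {i i' : Fin k} :
    (satGraph k s Q).Adj (Sum.inr (Sum.inl i)) (Sum.inr (Sum.inr i')) ↔ i = i' := by
  simp [satGraph]

@[simp]
theorem not_adj_pendant_pendant {i i' : Fin k} :
    ¬ (satGraph k s Q).Adj (Sum.inr (Sum.inr i)) (Sum.inr (Sum.inr i')) := by
  simp [satGraph]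

theorem adj_pendant_iff {i : Fin k} {w : Fin s ⊕ Fin k ⊕ Fin k} :
    (satGraph k s Q).Adj (Sum.inr (Sum.inr i)) w ↔ w = Sum.inr (Sum.inl i) := by
  rw [SimpleGraph.adj_comm]
  rcases w with j | i' | i' <;> simp [eq_comm]

theorem isCliqueSplit :
    IsCliqueSplit (satGraph k s Q) (Set.range Sum.inl)
      (fun i => ({Sum.inr (Sum.inl i), Sum.inr (Sum.inr i)} : Set (Fin s ⊕ Fin k ⊕ Fin k))) where
  center_clique := by
    rintro _ ⟨j, rfl⟩ _ ⟨j', rfl⟩ hne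
    simpa using hne
  periph_clique i := by
    rintro u (rfl | rfl) v (rfl | rfl) hne <;> simp_all [SimpleGraph.adj_comm]
  center_disj i := by
    simp [Set.disjoint_left]
  periph_disj i i' hne := by
    simp [Set.disjoint_left, hne]
  covers := by
    ext (j | i | i) <;> simp
  no_cross i i' hne := by
    rintro u (rfl | rfl) v (rfl | rfl) <;> simp [SimpleGraph.adj_comm, hne, Ne.symm hne]

theorem clause_notMem_of_isPerfectCode (hQ : ∀ j, (Q j).Nonempty)
    {D : Set (Fin s ⊕ Fin k ⊕ Fin k)} (hD : IsPerfectCode (satGraph k s Q) D) (j : Fin s) :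
    Sum.inl j ∉ D := fun hj => by
  obtain ⟨i, hi⟩ := hQ j
  exact Sum.inl_ne_inr (hD.eq_pendant_of_adj (fun _ => adj_pendant_iff) hj (adj_var_clause.2 hi))

theorem existsUnique_var_mem_of_isPerfectCode (hQ : ∀ j, (Q j).Nonempty)
    {D : Set (Fin s ⊕ Fin k ⊕ Fin k)} (hD : IsPerfectCode (satGraph k s Q) D) (j : Fin s) :
    ∃! i, i ∈ Q j ∧ Sum.inr (Sum.inl i) ∈ D := by
  have hjD := clause_notMem_of_isPerfectCode hQ hD j
  obtain ⟨u, huD, hju⟩ := hD.exists_adj_of_notMem hjD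
  rcases u with j' | i | i
  · exact absurd huD (clause_notMem_of_isPerfectCode hQ hD j')
  · refine ⟨i, ⟨adj_clause_var.1 hju, huD⟩, fun i' ⟨hi'Q, hi'D⟩ => ?_⟩
    exact Sum.inl_injective <| Sum.inr_injective <|
      hD.eq_of_adj_of_notMem hjD hi'D huD (adj_clause_var.2 hi'Q) hju
  · exact absurd hju not_adj_clause_pendant

def assignmentCode (T : Set (Fin k)) : Set (Fin s ⊕ Fin k ⊕ Fin k) :=
  Sum.elim (fun _ => False) (Sum.elim (· ∈ T) (· ∉ T))

@[simp]
theorem clause_notMem_assignmentCode {T : Set (Fin k)} {j : Fin s} :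
    Sum.inl j ∉ assignmentCode T :=
  id

@[simp]
theorem var_mem_assignmentCode {T : Set (Fin k)} {i : Fin k} :
    Sum.inr (Sum.inl i) ∈ assignmentCode (s := s) T ↔ i ∈ T :=
  Iff.rfl

@[simp]
theorem pendant_mem_assignmentCode {T : Set (Fin k)} {i : Fin k} :
    Sum.inr (Sum.inr i) ∈ assignmentCode (s := s) T ↔ i ∉ T :=
  Iff.rfl

theorem isPerfectCode_assignmentCode {T : Set (Fin k)}
    (hT : ∀ j, ∃! i, i ∈ Q j ∧ i ∈ T) :
    IsPerfectCode (satGraph k s Q) (assignmentCode T) := by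
  refine ⟨?_, ?_⟩
  · rintro (j | i | i) hu (j' | i' | i') hv - hadj <;>
      simp_all [SimpleGraph.adj_comm]
  · rintro (j | i | i)
    · obtain ⟨i, hi, huniq⟩ := hT j
      refine .inr ⟨Sum.inr (Sum.inl i), ⟨hi.2, adj_clause_var.2 hi.1⟩, ?_⟩
      rintro (j' | i' | i') ⟨hD, hadj⟩ <;> simp_all
    · by_cases hi : i ∈ T
      · exact .inl hi
      refine .inr ⟨Sum.inr (Sum.inr i), by simpa using hi, ?_⟩
      rintro (j' | i' | i') ⟨hD, hadj⟩ <;> simp_all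
    · by_cases hi : i ∈ T
      · refine .inr ⟨Sum.inr (Sum.inl i), by simpa [SimpleGraph.adj_comm] using hi, ?_⟩
        rintro (j' | i' | i') ⟨hD, hadj⟩ <;> simp_all [SimpleGraph.adj_comm]
      · exact .inl hi

end satGraph

/-- The graph `satGraph k s Q` built from a One-in-Three 3SAT instance (no negations,
each clause a set of exactly three variables) is unipolar, with clique split whose center
is the clique of clause vertices and whose peripheral cliques are the pairs
`{x i, a i}`; and it has a perfect code if and only if some truth assignment sets exactly
one variable of each clause to TRUE. -/
theorem satGraph_unipolar_perfectCode_iff (k s : ℕ) (Q : Fin s → Finset (Fin k))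
    (hQ : ∀ j, (Q j).card = 3) :
    IsCliqueSplit (satGraph k s Q) (Set.range Sum.inl)
      (fun i => ({Sum.inr (Sum.inl i), Sum.inr (Sum.inr i)} : Set (Fin s ⊕ Fin k ⊕ Fin k))) ∧
    ((∃ D : Set (Fin s ⊕ Fin k ⊕ Fin k), IsPerfectCode (satGraph k s Q) D) ↔
      ∃ T : Set (Fin k), ∀ j : Fin s, ∃! i : Fin k, i ∈ Q j ∧ i ∈ T) := by
  have hQne : ∀ j, (Q j).Nonempty := fun j => Finset.card_pos.1 (by rw [hQ j]; norm_num)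
  refine ⟨satGraph.isCliqueSplit, ⟨?_, ?_⟩⟩
  · rintro ⟨D, hD⟩
    exact ⟨{i | Sum.inr (Sum.inl i) ∈ D}, satGraph.existsUnique_var_mem_of_isPerfectCode hQne hD⟩
  · rintro ⟨T, hT⟩
    exact ⟨_, satGraph.isPerfectCode_assignmentCode hT⟩
end

section
/- Let G = (K ∪ I, E) be a split graph whose vertex set is partitioned into a clique K and an independent set I. If a perfect code D of G contains a vertex x ∈ K, then every vertex of I is either adjacent to x or an isolated vertex of G; and if D contains no vertex of K, then the neighborhoods in K of the vertices of I ∩ D partition K. -/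
/-- Let `G` be a split graph whose vertex set is partitioned into a clique `K` and an
independent set `I`, and let `D` be a perfect code of `G`. If `D` contains a vertex
`x ∈ K`, then every vertex of `I` is either adjacent to `x` or isolated; and if `D`
contains no vertex of `K`, then the neighborhoods in `K` of the vertices of `I ∩ D`
partition `K` (every vertex of `K` is adjacent to exactly one vertex of `I ∩ D`). -/
theorem splitGraph_perfectCode {V : Type*} (G : SimpleGraph V) (K I : Set V)
    (hcover : K ∪ I = Set.univ) (hdisj : Disjoint K I)
    (hK : G.IsClique K) (hI : I.Pairwise fun u v => ¬ G.Adj u v)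
    (D : Set V) (hD : IsPerfectCode G D) :
    (∀ x ∈ K, x ∈ D → ∀ v ∈ I, G.Adj x v ∨ ∀ w : V, ¬ G.Adj v w) ∧
    ((∀ x ∈ K, x ∉ D) → ∀ u ∈ K, ∃! v : V, v ∈ I ∩ D ∧ G.Adj u v) := by
  obtain ⟨hind, hcode⟩ := hD
  have mem : ∀ v : V, v ∈ K ∨ v ∈ I := fun v => by
    have : v ∈ K ∪ I := by rw [hcover]; exact Set.mem_univ v
    exact this
  constructor
  · intro x hxK hxD v hvI
    by_contra hcon
    push_neg at hcon
    obtain ⟨hnadj, w, hvw⟩ := hcon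
    have hvw' : v ≠ w := fun e => G.irrefl (e ▸ hvw)
    have hwK : w ∈ K := by
      rcases mem w with h | h
      · exact h
      · exact absurd hvw (hI hvI h hvw')
    have hvx : v ≠ x := fun e => Set.disjoint_right.mp hdisj hvI (e ▸ hxK)
    by_cases hvD : v ∈ D
    · have hwx : w ≠ x := fun e => hnadj ((e ▸ hvw).symm)
      have hwD : w ∉ D := fun hwD => hind hwD hxD hwx (hK hwK hxK hwx)
      rcases hcode w with h | ⟨y, _, huniq⟩
      · exact hwD h
      · exact hvx ((huniq v ⟨hvD, hvw.symm⟩).trans (huniq x ⟨hxD, hK hwK hxK hwx⟩).symm)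
    · rcases hcode v with h | ⟨u, ⟨huD, hvu⟩, _⟩
      · exact hvD h
      · have hvu' : v ≠ u := fun e => G.irrefl (e ▸ hvu)
        have huK : u ∈ K := by
          rcases mem u with h | h
          · exact h
          · exact absurd hvu (hI hvI h hvu')
        have hux : u ≠ x := fun e => hnadj (e ▸ hvu).symm
        exact hind huD hxD hux (hK huK hxK hux)
  · intro hKD u huK
    rcases hcode u with h | ⟨v, ⟨hvD, huv⟩, huniq⟩
    · exact absurd h (hKD u huK)
    · have hvI : v ∈ I := by
        rcases mem v with h | h
        · exact absurd hvD (hKD v h)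
        · exact h
      refine ⟨v, ⟨⟨hvI, hvD⟩, huv⟩, ?_⟩
      rintro v' ⟨⟨_, hv'D⟩, huv'⟩
      exact huniq v' ⟨hv'D, huv'⟩
end
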